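/- For all η ∈ (0,1/2), ν ∈ [0,1), and p_A1 ∈ (0,1) with η < 1 - p_A1 and η < p_A1, the reweighting factor Z = (1 - p_A1·(1-ν)) / ((1-ν)(1 - p_A1)) satisfies (η + (1-η)ν) / ((1-η)(1-ν)) < Z < (1-η + η·ν) / (η(1-ν)). -/

import Mathlib

/-! Multiplying through by `1 - ν` and writing `odds x = x / (1 - x)`, the three quantities become
`odds η + ν`, `1 + ν * odds pA1` and `odds (1 - η) + ν`. Since `η < 1/2` we have
`odds η < 1 < odds (1 - η)`, and `η < pA1 < 1 - η` gives `odds η < odds pA1 < odds (1 - η)`;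
both gaps are then sums of a positive multiple of `1 - ν` and a nonnegative multiple of `ν`. -/

noncomputable def odds (p : ℝ) : ℝ := p / (1 - p)

lemma odds_lt_odds {p q : ℝ} (hpq : p < q) (hq : q < 1) : odds p < odds q := by
  unfold odds
  rw [div_lt_div_iff₀ (by linarith) (by linarith)]
  linarith

lemma odds_lt_one {p : ℝ} (hp : p < 1 / 2) : odds p < 1 := by
  unfold odds
  rw [div_lt_one (by linarith)]
  linarith

lemma one_lt_odds {p : ℝ} (hp₀ : 1 / 2 < p) (hp₁ : p < 1) : 1 < odds p := by
  unfold odds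
  rw [one_lt_div (by linarith)]
  linarith

lemma div_one_sub_mul_one_sub_eq_odds_add {x : ℝ} (ν : ℝ) (hx : x ≠ 1) :
    (x + (1 - x) * ν) / ((1 - x) * (1 - ν)) = (odds x + ν) / (1 - ν) := by
  have hx' : 1 - x ≠ 0 := sub_ne_zero.mpr hx.symm
  unfold odds
  rw [div_add' _ _ _ hx', div_div, mul_comm ν]

lemma div_one_sub_mul_one_sub_eq_one_add_mul_odds {p : ℝ} (ν : ℝ) (hp : p ≠ 1) :
    (1 - p * (1 - ν)) / ((1 - ν) * (1 - p)) = (1 + ν * odds p) / (1 - ν) := by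
  have hp' : 1 - p ≠ 0 := sub_ne_zero.mpr hp.symm
  unfold odds
  rw [mul_div_assoc', one_add_div hp', div_div, mul_comm (1 - p)]
  ring_nf

lemma add_lt_one_add_mul {a c ν : ℝ} (ha : a < 1) (hac : a ≤ c) (hν₀ : 0 ≤ ν) (hν₁ : ν < 1) :
    a + ν < 1 + ν * c := by
  have hgap : 1 + ν * c - (a + ν) = (1 - ν) * (1 - a) + ν * (c - a) := by ring
  linarith [mul_pos (sub_pos.mpr hν₁) (sub_pos.mpr ha), mul_nonneg hν₀ (sub_nonneg.mpr hac)]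

lemma one_add_mul_lt_add {b c ν : ℝ} (hb : 1 < b) (hcb : c ≤ b) (hν₀ : 0 ≤ ν) (hν₁ : ν < 1) :
    1 + ν * c < b + ν := by
  have hgap : b + ν - (1 + ν * c) = (1 - ν) * (b - 1) + ν * (b - c) := by ring
  linarith [mul_pos (sub_pos.mpr hν₁) (sub_pos.mpr hb), mul_nonneg hν₀ (sub_nonneg.mpr hcb)]

theorem reweighting_factor_in_valid_interval_general
    (η ν pA1 : ℝ)
    (hη0 : 0 < η) (hη1 : η < 1/2)
    (hν0 : 0 ≤ ν) (hν1 : ν < 1)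
    (hlt1 : η < 1 - pA1) (hlt2 : η < pA1) :
    (η + (1 - η) * ν) / ((1 - η) * (1 - ν))
      < (1 - pA1 * (1 - ν)) / ((1 - ν) * (1 - pA1)) ∧
    (1 - pA1 * (1 - ν)) / ((1 - ν) * (1 - pA1))
      < (1 - η + η * ν) / (η * (1 - ν)) := by
  have hs : 0 < 1 - ν := by linarith
  have hupper := div_one_sub_mul_one_sub_eq_odds_add ν (by linarith : 1 - η ≠ 1)
  rw [sub_sub_cancel] at hupper
  rw [div_one_sub_mul_one_sub_eq_odds_add ν (by linarith : η ≠ 1),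
    div_one_sub_mul_one_sub_eq_one_add_mul_odds ν (by linarith : pA1 ≠ 1), hupper]
  have hodds_lower : odds η < odds pA1 := odds_lt_odds hlt2 (by linarith)
  have hodds_upper : odds pA1 < odds (1 - η) := odds_lt_odds (by linarith) (by linarith)
  exact ⟨div_lt_div_of_pos_right
      (add_lt_one_add_mul (odds_lt_one hη1) hodds_lower.le hν0 hν1) hs,
    div_lt_div_of_pos_right
      (one_add_mul_lt_add (one_lt_odds (by linarith) (by linarith)) hodds_upper.le hν0 hν1) hs⟩

theorem reweighting_factor_in_valid_interval
    (η ν pA1 : ℝ)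
    (hη0 : 0 < η) (hη1 : η < 1/2)
    (hν0 : 0 ≤ ν) (hν1 : ν < 1)
    (hp0 : 0 < pA1) (hp1 : pA1 < 1)
    (hlt1 : η < 1 - pA1) (hlt2 : η < pA1) :
    (η + (1 - η) * ν) / ((1 - η) * (1 - ν))
      < (1 - pA1 * (1 - ν)) / ((1 - ν) * (1 - pA1)) ∧
    (1 - pA1 * (1 - ν)) / ((1 - ν) * (1 - pA1))
      < (1 - η + η * ν) / (η * (1 - ν)) :=
  reweighting_factor_in_valid_interval_general η ν pA1 hη0 hη1 hν0 hν1 hlt1 hlt2
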